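/- Let G be a simple graph and F a field over which Z₂(G) is representable. Then there is a V(G)×V(G) matrix A over F with these properties: (1) A has nonzero entries in precisely the same positions where the adjacency matrix A(G) has nonzero entries; and (2) the matrix (I | A), with I an identity matrix, represents a matroid that shelters Z₂(G), with the columns of I and A corresponding to the φ and χ elements, respectively. -/

import Mathlib

open Matrix

noncomputable section

/-- The rank over `F` of the set of columns of `M` indexed by `S`. -/
def colSpanRank (F : Type*) [Field F] {m n : Type*} (M : Matrix m n F) (S : Set n) : ℕ :=
  Module.finrank F ↥(Submodule.span F ((fun j i => M i j) '' S))

/-- A subtransversal of `W₂(G) = V × {φ,χ}`: at most one element of each pair. -/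
def Subtransversal2 {V : Type*} (S : Set (V × Fin 2)) : Prop :=
  ∀ v i j, (v, i) ∈ S → (v, j) ∈ S → i = j

/-- The matrix `IA(G) = (I | A)` over GF(2); the columns `(v,0)` and `(v,1)` are
`φ_G(v)` and `χ_G(v)` respectively. -/
def IAmat {V : Type*} [DecidableEq V] (A : Matrix V V (ZMod 2)) :
    Matrix V (V × Fin 2) (ZMod 2) :=
  Matrix.of fun v p => if p.2 = 0 then (if v = p.1 then 1 else 0) else A v p.1

/-- The isotropic 2-matroid `Z₂(G)` is representable over `F`. -/
def Z2Rep (F : Type*) [Field F] {V : Type*} [Fintype V] [DecidableEq V]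
    (A : Matrix V V (ZMod 2)) : Prop :=
  ∃ (k : ℕ) (P : Matrix (Fin k) (V × Fin 2) F),
    ∀ S : Set (V × Fin 2), Subtransversal2 S →
      colSpanRank F P S = colSpanRank (ZMod 2) (IAmat A) S


/-- The matrix `(I | A')` over an arbitrary field, columns indexed by `V × {φ,χ}`. -/
def IAmatF (F : Type*) [Field F] {V : Type*} [DecidableEq V] (A' : Matrix V V F) :
    Matrix V (V × Fin 2) F :=
  Matrix.of fun v p => if p.2 = 0 then (if v = p.1 then 1 else 0) else A' v p.1

/-!
The φ-columns of a representation `P` of `Z₂(G)` are independent, since `φ(V)` is a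
subtransversal of rank `|V|`. As `G` has no loops, `χ(v)` together with `φ(V ∖ {v})` also has
rank `|V| - 1`, so every χ-column of `P` is a combination of φ-columns. Writing the coefficients
of these combinations into a matrix `A'` gives `P = Φ (I | A')` with `Φ` injective, hence
`(I | A')` has the same rank function as `P`. Finally `A'` and `A(G)` have the same zero
pattern because, for `u ∉ T`, the set `{χ(u)} ∪ φ(T)` has rank `|T|` exactly when column `u`
vanishes off `T`; taking `T = V ∖ {u, v}` isolates the entry at `(v, u)`.
-/

open Submodule

section ColSpanRank

variable {K : Type*} [Field K] {m n : Type*}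

lemma colSpanRank_insert_eq_iff [Finite m] (M : Matrix m n K) (j : n) (S : Set n) :
    colSpanRank K M (insert j S) = colSpanRank K M S ↔
      (fun i => M i j) ∈ span K ((fun j i => M i j) '' S) := by
  unfold colSpanRank
  rw [Set.image_insert_eq]
  refine ⟨fun h => ?_, fun h => by rw [span_insert_eq_span h]⟩
  have hle : span K ((fun j i => M i j) '' S) ≤ span K (insert (fun i => M i j) _) :=
    span_mono (Set.subset_insert _ _)
  rw [eq_of_le_of_finrank_eq hle h.symm]
  exact subset_span (Set.mem_insert _ _)

lemma colSpanRank_eq_of_injective {m' : Type*} (M : Matrix m n K) (N : Matrix m' n K)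
    (U : (m → K) →ₗ[K] (m' → K)) (hU : Function.Injective U)
    (hUM : ∀ j, U (fun i => M i j) = fun i => N i j) (S : Set n) :
    colSpanRank K M S = colSpanRank K N S := by
  have himage : (fun j i => N i j) '' S = U '' ((fun j i => M i j) '' S) := by
    simp only [Set.image_image, hUM]
  unfold colSpanRank
  rw [himage, ← map_span]
  exact (equivMapOfInjective U hU _).finrank_eq

end ColSpanRank

section IAmatF

variable {K : Type*} [Field K] {V : Type*}

/-- The φ-elements `φ(T) ⊆ W₂(G)` of a set `T` of vertices. -/
def phiSet (T : Set V) : Set (V × Fin 2) := (·, 0) '' T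

lemma subtransversal2_phiSet (T : Set V) : Subtransversal2 (phiSet T) := by
  rintro v i j ⟨u, -, hu⟩ ⟨u', -, hu'⟩
  simp only [Prod.mk.injEq] at hu hu'
  rw [← hu.2, ← hu'.2]

lemma subtransversal2_insert_phiSet {v : V} {T : Set V} (hv : v ∉ T) :
    Subtransversal2 (insert (v, 1) (phiSet T)) := by
  rintro w i j (hi | ⟨u, hu, hi⟩) (hj | ⟨u', hu', hj⟩) <;>
    simp only [Prod.mk.injEq] at hi hj
  · rw [hi.2, hj.2]
  · exact (hv (by rw [← hi.1, ← hj.1]; exact hu')).elim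
  · exact (hv (by rw [← hj.1, ← hi.1]; exact hu)).elim
  · rw [← hi.2, ← hj.2]

variable [DecidableEq V]

lemma IAmatF_col_one (B : Matrix V V K) (u : V) :
    (fun i => IAmatF K B i (u, 1)) = fun i => B i u := by
  funext i
  simp [IAmatF]

variable [Finite V]

lemma IAmatF_col_zero (B : Matrix V V K) (u : V) :
    (fun i => IAmatF K B i (u, 0)) = Pi.basisFun K V u := by
  funext i
  simp [IAmatF, Pi.basisFun_apply, Pi.single_apply]

lemma span_IAmatF_phiSet (B : Matrix V V K) (T : Set V) :
    span K ((fun j i => IAmatF K B i j) '' phiSet T) = Pi.spanSubset K T := by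
  simp only [phiSet, Set.image_image, IAmatF_col_zero, Pi.spanSubset]

lemma colSpanRank_IAmatF_phiSet (B : Matrix V V K) (T : Set V) :
    colSpanRank K (IAmatF K B) (phiSet T) = T.ncard := by
  rw [colSpanRank, span_IAmatF_phiSet, Pi.dim_spanSubset]

lemma colSpanRank_IAmatF_insert_phiSet_eq_iff (B : Matrix V V K) (v : V) (T : Set V) :
    colSpanRank K (IAmatF K B) (insert (v, 1) (phiSet T)) = T.ncard ↔ ∀ w ∉ T, B w v = 0 := by
  rw [← colSpanRank_IAmatF_phiSet B T, colSpanRank_insert_eq_iff, span_IAmatF_phiSet,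
    IAmatF_col_one, Pi.mem_spanSubset_iff]

lemma IAmatF_eq_zero_iff_of_colSpanRank_eq {K' : Type*} [Field K'] (B : Matrix V V K)
    (B' : Matrix V V K')
    (h : ∀ S, Subtransversal2 S →
      colSpanRank K (IAmatF K B) S = colSpanRank K' (IAmatF K' B') S)
    {u : V} (hu' : B' u u = 0) (v : V) : B v u = 0 ↔ B' v u = 0 := by
  have hcol : ∀ T, u ∉ T → ((∀ w ∉ T, B w u = 0) ↔ ∀ w ∉ T, B' w u = 0) := fun T hu => by
    rw [← colSpanRank_IAmatF_insert_phiSet_eq_iff, ← colSpanRank_IAmatF_insert_phiSet_eq_iff,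
      h _ (subtransversal2_insert_phiSet hu)]
  have hu : B u u = 0 := by
    simpa only [Set.mem_compl_iff, not_not, Set.mem_singleton_iff, forall_eq, hu', iff_true]
      using hcol {u}ᶜ (by simp)
  simpa only [Set.mem_compl_iff, not_not, Set.mem_insert_iff, Set.mem_singleton_iff, or_imp,
    forall_and, forall_eq, hu, hu', and_true] using hcol {v, u}ᶜ (by simp)

end IAmatF

section Representation

variable {K K' : Type*} [Field K] [Field K'] {m V : Type*} [DecidableEq V]

lemma linearIndependent_phi_of_colSpanRank_eq [Fintype V] (P : Matrix m (V × Fin 2) K)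
    (B : Matrix V V K')
    (hP : ∀ S, Subtransversal2 S → colSpanRank K P S = colSpanRank K' (IAmatF K' B) S) :
    LinearIndependent K fun v i => P i (v, 0) := by
  have hrank := hP _ (subtransversal2_phiSet Set.univ)
  rw [colSpanRank_IAmatF_phiSet, Set.ncard_univ, Nat.card_eq_fintype_card, colSpanRank, phiSet,
    Set.image_image, Set.image_univ] at hrank
  exact linearIndependent_iff_card_eq_finrank_span.2 hrank.symm

lemma col_one_mem_span_phi_of_colSpanRank_eq [Finite m] [Finite V]
    (P : Matrix m (V × Fin 2) K) (B : Matrix V V K')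
    (hP : ∀ S, Subtransversal2 S → colSpanRank K P S = colSpanRank K' (IAmatF K' B) S)
    {v : V} (hv : B v v = 0) :
    (fun i => P i (v, 1)) ∈ span K (Set.range fun u i => P i (u, 0)) := by
  have hvT : v ∉ ({v}ᶜ : Set V) := by simp
  have hrank :
      colSpanRank K P (insert (v, 1) (phiSet {v}ᶜ)) = colSpanRank K P (phiSet {v}ᶜ) := by
    rw [hP _ (subtransversal2_insert_phiSet hvT), hP _ (subtransversal2_phiSet _),
      colSpanRank_IAmatF_phiSet, colSpanRank_IAmatF_insert_phiSet_eq_iff]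
    simpa using hv
  refine span_mono ?_ ((colSpanRank_insert_eq_iff P _ _).1 hrank)
  rw [phiSet, Set.image_image]
  exact Set.image_subset_range _ _

lemma exists_IAmatF_colSpanRank_eq [Fintype V] (P : Matrix m (V × Fin 2) K)
    (hφ : LinearIndependent K fun v i => P i (v, 0))
    (hχ : ∀ v, (fun i => P i (v, 1)) ∈ span K (Set.range fun u i => P i (u, 0))) :
    ∃ B : Matrix V V K, ∀ S, colSpanRank K (IAmatF K B) S = colSpanRank K P S := by
  choose c hc using fun v => (mem_span_range_iff_exists_fun K).1 (hχ v)
  refine ⟨Matrix.of fun w u => c u w, colSpanRank_eq_of_injective (IAmatF K _) P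
    (Fintype.linearCombination K fun v i => P i (v, 0))
    (linearIndependent_iff_injective_fintypeLinearCombination.1 hφ) ?_⟩
  rintro ⟨u, b⟩
  match b with
  | 0 => rw [IAmatF_col_zero, Pi.basisFun_apply, Fintype.linearCombination_apply_single, one_smul]
  | 1 => rw [IAmatF_col_one, Fintype.linearCombination_apply]; exact hc u

end Representation

theorem Z2_standard_representation_general
    {V : Type} [Fintype V] [DecidableEq V] (A : Matrix V V (ZMod 2))
    (hdiag : ∀ v, A v v = 0)
    (F : Type) [Field F] (hrep : Z2Rep F A) :
    ∃ A' : Matrix V V F,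
      (∀ v u : V, A' v u ≠ 0 ↔ A v u ≠ 0) ∧
      (∀ S : Set (V × Fin 2), Subtransversal2 S →
        colSpanRank F (IAmatF F A') S = colSpanRank (ZMod 2) (IAmat A) S) := by
  obtain ⟨k, P, hP⟩ := hrep
  obtain ⟨A', hA'⟩ := exists_IAmatF_colSpanRank_eq P
    (linearIndependent_phi_of_colSpanRank_eq P A hP)
    (fun v => col_one_mem_span_phi_of_colSpanRank_eq P A hP (hdiag v))
  have hshelter : ∀ S, Subtransversal2 S →
      colSpanRank F (IAmatF F A') S = colSpanRank (ZMod 2) (IAmat A) S :=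
    fun S hS => (hA' S).trans (hP S hS)
  refine ⟨A', fun v u => ?_, hshelter⟩
  exact not_congr (IAmatF_eq_zero_iff_of_colSpanRank_eq A' A hshelter (hdiag u) v)

/-- If `Z₂(G)` is representable over `F`, then there is a `V × V` matrix `A'` over `F`
whose nonzero entries are exactly where `A(G)` has nonzero entries, and such that
`(I | A')` represents a matroid sheltering `Z₂(G)`. -/
theorem Z2_standard_representation
    {V : Type} [Fintype V] [DecidableEq V] (A : Matrix V V (ZMod 2))
    (hsym : A.IsSymm) (hdiag : ∀ v, A v v = 0)
    (F : Type) [Field F] (hrep : Z2Rep F A) :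
    ∃ A' : Matrix V V F,
      (∀ v u : V, A' v u ≠ 0 ↔ A v u ≠ 0) ∧
      (∀ S : Set (V × Fin 2), Subtransversal2 S →
        colSpanRank F (IAmatF F A') S = colSpanRank (ZMod 2) (IAmat A) S) :=
  Z2_standard_representation_general A hdiag F hrep
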